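/- A function f : {-1,0,1}ⁿ → ℝ ∪ {∞} is bisubmodular (i.e., f(x) + f(y) ≥ f(x ∧ y) + f(x ⊔ y) for all x, y) if and only if its Lovász extension (the piecewise-linear extension to [-1,1]ⁿ interpolating f on each simplex with vertices 0, s_{i₁}, s_{i₁}+s_{i₂}, ..., s_{i₁}+⋯+s_{i_n} for permutations (i₁,...,i_n) and signs s_i ∈ {e_i, −e_i}) is a convex function on [-1,1]ⁿ. -/

import Mathlib

open scoped Classical

/-- The three-element semilattice `S₂ = {-1,0,1}`: `zero` below the incomparable `pos`,
`neg`. -/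
inductive S2 : Type
  | zero | pos | neg
deriving DecidableEq

instance : Fintype S2 :=
  ⟨{S2.zero, S2.pos, S2.neg}, fun x => by cases x <;> simp⟩

/-- Componentwise meet on `S₂`: `a ∧ b = a` if `a = b`, else `0`. -/
def S2.meet (a b : S2) : S2 := if a = b then a else S2.zero

/-- Componentwise pseudo join on `S₂`: the larger of `a, b` (in the order `0 < ±1`) if
comparable, and `0` if `a = -b ≠ 0`. -/
def S2.pj (a b : S2) : S2 :=
  if a = b then a else if a = S2.zero then b else if b = S2.zero then a else S2.zero

/-- The point of `S₂ⁿ` obtained from `x ∈ [-1,1]ⁿ` by thresholding at level `t`: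
component `i` is `sign (x i)` if `t < |x i|` and `0` otherwise. -/
noncomputable def thresh {n : ℕ} (x : Fin n → ℝ) (t : ℝ) : Fin n → S2 := fun i =>
  if t < |x i| then (if 0 < x i then S2.pos else S2.neg) else S2.zero

/-- The barycentric weight of the vertex `u ∈ S₂ⁿ` in the chain decomposition of
`x ∈ [-1,1]ⁿ`: the measure of the set of levels `t ∈ (0,1]` whose threshold point is `u`. -/
noncomputable def weight {n : ℕ} (x : Fin n → ℝ) (u : Fin n → S2) : ℝ :=
  (MeasureTheory.volume {t : ℝ | t ∈ Set.Ioc (0 : ℝ) 1 ∧ thresh x t = u}).toReal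

/-- The Lovász extension of `f : S₂ⁿ → ℝ ∪ {∞}` to `[-1,1]ⁿ`: the piecewise-linear
interpolation of `f` along the chain containing `x`, i.e. the weighted combination of the
values of `f` at the threshold points of `x`. -/
noncomputable def lovasz {n : ℕ} (f : (Fin n → S2) → EReal) (x : Fin n → ℝ) : EReal :=
  ∑ u : Fin n → S2, ((weight x u : ℝ) : EReal) * f u

/-!
For `x` in the cube, the level sets `{t ∈ (0,1] | thresh x t = u}` make `weight x` a probability
vector on `S₂ⁿ` with barycentre `x`, supported on a chain (`thresh x t` decreases in `t`).
Conversely a probability vector `μ` supported on a chain is recovered as `weight (bary μ)`: the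
vertex `u` of the chain is the threshold point exactly on a level interval of length `μ u`.
Thus `lovasz f x` is the cost `∑ μ u * f u` of the chain representation of `x`.

If the extension is convex, evaluate it at the midpoint of two vertices `x, y`: its chain
representation is `(δ (x ∧ y) + δ (x ⊔ y)) / 2`, because `x ∧ y ≤ x ⊔ y` and
`emb (x ∧ y) + emb (x ⊔ y) = emb x + emb y`.

If `f` is bisubmodular, the chain representation of a point is the cheapest of all its
representations. Among the representations not more expensive than a given one (a compact set)
choose one minimizing a potential. Were two incomparable `u, v` in its support, moving mass from
`u, v` to `u ∧ v, u ⊔ v` would keep the barycentre, not increase the cost, and strictly decrease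
the potential.
-/

open MeasureTheory

lemma Finset.card_inter_sq_add_card_union_sq {α : Type*} [DecidableEq α] (A B : Finset α) :
    (A ∩ B).card ^ 2 + (A ∪ B).card ^ 2
      = A.card ^ 2 + B.card ^ 2 + 2 * (A \ B).card * (B \ A).card := by
  have hA := Finset.card_sdiff_add_card_inter A B
  have hB := Finset.card_sdiff_add_card_inter B A
  have hU := Finset.card_union_add_card_inter A B
  rw [Finset.inter_comm B A] at hB
  nlinarith

lemma single_one_nonneg {α : Type*} [DecidableEq α] (w u : α) :
    0 ≤ (Pi.single w 1 : α → ℝ) u := by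
  rw [Pi.single_apply]; split_ifs <;> norm_num

lemma exists_mass_transfer {α : Type*} [Fintype α] [DecidableEq α] {ν : α → ℝ}
    (h0 : ∀ w, 0 ≤ ν w) {u v : α} (hu : ν u ≠ 0) (hv : ν v ≠ 0) (huv : u ≠ v) (a b : α) :
    ∃ ν' : α → ℝ, (∀ w, 0 ≤ ν' w) ∧
      Function.support ν' ⊆ insert a (insert b (Function.support ν)) ∧
      ∃ ε > 0, ∀ h : α → ℝ, ∑ w, ν' w * h w = ∑ w, ν w * h w + ε * (h a + h b - h u - h v) := by
  set ε := min (ν u) (ν v)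
  have hε : 0 < ε := lt_min ((h0 u).lt_of_ne' hu) ((h0 v).lt_of_ne' hv)
  refine ⟨ν + ε • (Pi.single a 1 + Pi.single b 1 - Pi.single u 1 - Pi.single v 1), fun w => ?_,
    fun w hw => ?_, ε, hε, fun h => ?_⟩
  · have ha := single_one_nonneg a w
    have hb := single_one_nonneg b w
    simp only [Pi.add_apply, Pi.smul_apply, Pi.sub_apply, smul_eq_mul]
    rcases eq_or_ne w u with rfl | hwu
    · simp only [Pi.single_eq_same, Pi.single_eq_of_ne huv]
      nlinarith [min_le_left (ν w) (ν v)]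
    rcases eq_or_ne w v with rfl | hwv
    · simp only [Pi.single_eq_same, Pi.single_eq_of_ne hwu]
      nlinarith [min_le_right (ν u) (ν w)]
    simp only [Pi.single_eq_of_ne hwu, Pi.single_eq_of_ne hwv]
    nlinarith [h0 w]
  · by_contra hw'
    simp only [Set.mem_insert_iff, Function.mem_support, not_or, not_not] at hw'
    obtain ⟨hwa, hwb, hνw⟩ := hw'
    have hwu : w ≠ u := fun h => hu (h ▸ hνw)
    have hwv : w ≠ v := fun h => hv (h ▸ hνw)
    simp [hwa, hwb, hwu, hwv, hνw] at hw
  · simp only [Pi.add_apply, Pi.smul_apply, Pi.sub_apply, smul_eq_mul, add_mul, sub_mul, mul_assoc,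
      Finset.sum_add_distrib, Finset.sum_sub_distrib, ← Finset.mul_sum, Pi.single_apply, ite_mul,
      one_mul, zero_mul, Finset.sum_ite_eq', Finset.mem_univ, if_true]

namespace EReal

lemma coe_finset_sum {α : Type*} (s : Finset α) (h : α → ℝ) :
    ((∑ a ∈ s, h a : ℝ) : EReal) = ∑ a ∈ s, (h a : EReal) :=
  map_sum (⟨⟨Real.toEReal, coe_zero⟩, coe_add⟩ : ℝ →+ EReal) h s

lemma coe_mul_finset_sum {α : Type*} (s : Finset α) (F : α → EReal) {c : ℝ} (hc : 0 ≤ c) :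
    (c : EReal) * ∑ a ∈ s, F a = ∑ a ∈ s, (c : EReal) * F a :=
  map_sum (⟨⟨((c : EReal) * ·), mul_zero _⟩,
    left_distrib_of_nonneg_of_ne_top (EReal.coe_nonneg.2 hc) (coe_ne_top c)⟩ : EReal →+ EReal) F s

lemma finset_sum_eq_top {α : Type*} {s : Finset α} {F : α → EReal} (hF : ∀ a ∈ s, F a ≠ ⊥)
    {a : α} (ha : a ∈ s) (htop : F a = ⊤) : ∑ b ∈ s, F b = ⊤ := by
  rw [← Finset.add_sum_erase s F ha, htop]
  refine top_add_of_ne_bot fun hbot => ?_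
  obtain ⟨b, hb, hFb⟩ := WithBot.sum_eq_bot_iff.1 hbot
  exact hF b (Finset.mem_of_mem_erase hb) hFb

lemma add_le_add_of_half_mul {a b c d : EReal}
    (h : ((2⁻¹ : ℝ) : EReal) * a + ((2⁻¹ : ℝ) : EReal) * b
      ≤ ((2⁻¹ : ℝ) : EReal) * c + ((2⁻¹ : ℝ) : EReal) * d) : a + b ≤ c + d := by
  have h2 : (0 : EReal) ≤ ((2⁻¹ : ℝ) : EReal) := EReal.coe_nonneg.2 (by norm_num)
  rw [← left_distrib_of_nonneg_of_ne_top h2 (coe_ne_top _),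
    ← left_distrib_of_nonneg_of_ne_top h2 (coe_ne_top _)] at h
  have := mul_le_mul_of_nonneg_left h (EReal.coe_nonneg.2 (zero_le_two : (0 : ℝ) ≤ 2))
  rwa [← mul_assoc, ← mul_assoc, ← coe_mul, mul_inv_cancel₀ two_ne_zero, coe_one, one_mul,
    one_mul] at this

end EReal

section Combination

variable {α : Type*} [Fintype α]

lemma sum_coe_smul_add_smul_mul {a b : ℝ} (ha : 0 ≤ a) (hb : 0 ≤ b)
    {ν₁ ν₂ : α → ℝ} (h₁ : ∀ u, 0 ≤ ν₁ u) (h₂ : ∀ u, 0 ≤ ν₂ u) (F : α → EReal) :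
    ∑ u, (((a • ν₁ + b • ν₂) u : ℝ) : EReal) * F u
      = a * ∑ u, (ν₁ u : EReal) * F u + b * ∑ u, (ν₂ u : EReal) * F u := by
  rw [EReal.coe_mul_finset_sum _ _ ha, EReal.coe_mul_finset_sum _ _ hb, ← Finset.sum_add_distrib]
  refine Finset.sum_congr rfl fun u _ => ?_
  rw [Pi.add_apply, Pi.smul_apply, Pi.smul_apply, smul_eq_mul, smul_eq_mul, EReal.coe_add,
    EReal.right_distrib_of_nonneg (EReal.coe_nonneg.2 (mul_nonneg ha (h₁ u)))
      (EReal.coe_nonneg.2 (mul_nonneg hb (h₂ u))), EReal.coe_mul, EReal.coe_mul, mul_assoc,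
    mul_assoc]

lemma sum_coe_single_mul [DecidableEq α] (F : α → EReal) (w : α) :
    ∑ u, (((Pi.single w 1 : α → ℝ) u : ℝ) : EReal) * F u = F w := by
  rw [Finset.sum_eq_single w (fun u _ hu => by simp [hu]) (by simp)]
  simp

lemma sum_coe_mul_eq_coe_sum_mul_toReal {ν : α → ℝ} {F : α → EReal} (hbot : ∀ u, F u ≠ ⊥)
    (htop : ∀ u, ν u ≠ 0 → F u ≠ ⊤) :
    ∑ u, (ν u : EReal) * F u = ((∑ u, ν u * (F u).toReal : ℝ) : EReal) := by
  rw [EReal.coe_finset_sum]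
  refine Finset.sum_congr rfl fun u _ => ?_
  by_cases hu : ν u = 0
  · simp [hu]
  · rw [EReal.coe_mul, EReal.coe_toReal (htop u hu) (hbot u)]

lemma sum_coe_mul_eq_top {ν : α → ℝ} (h0 : ∀ u, 0 ≤ ν u) {F : α → EReal} (hbot : ∀ u, F u ≠ ⊥)
    {u : α} (hu : ν u ≠ 0) (htop : F u = ⊤) : ∑ v, (ν v : EReal) * F v = ⊤ :=
  EReal.finset_sum_eq_top (fun v _ => (EReal.mul_ne_bot _ _).2 ⟨.inl (EReal.coe_ne_bot _),
    .inr (hbot v), .inl (EReal.coe_ne_top _), .inl (EReal.coe_nonneg.2 (h0 v))⟩)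
    (Finset.mem_univ u) (by rw [htop, EReal.coe_mul_top_of_pos ((h0 u).lt_of_ne' hu)])

end Combination

namespace S2

instance : PartialOrder S2 where
  le a b := a = zero ∨ a = b
  le_refl _ := Or.inr rfl
  le_trans a b c := by cases a <;> cases b <;> cases c <;> simp
  le_antisymm a b := by cases a <;> cases b <;> simp

instance : MeasurableSpace S2 := ⊤

instance : DiscreteMeasurableSpace S2 := ⟨fun _ => trivial⟩

def emb : S2 → ℝ
  | zero => 0
  | pos => 1
  | neg => -1

lemma zero_le (a : S2) : zero ≤ a := Or.inl rfl

lemma eq_of_le_of_ne_zero {a b : S2} (h : a ≤ b) (ha : a ≠ zero) : b = a :=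
  (h.resolve_left ha).symm

lemma abs_emb_le_one (a : S2) : |emb a| ≤ 1 := by cases a <;> simp [emb]

lemma abs_emb_of_ne_zero {a : S2} (ha : a ≠ zero) : |emb a| = 1 := by
  cases a <;> simp_all [emb]

lemma emb_eq_mul_abs_emb {a b : S2} (h : a ≤ b ∨ b ≤ a) (hb : b ≠ zero) :
    emb a = emb b * |emb a| := by
  revert h hb; cases a <;> cases b <;> simp [emb, LE.le]

lemma emb_meet_add_emb_pj (a b : S2) : emb (meet a b) + emb (pj a b) = emb a + emb b := by
  cases a <;> cases b <;> simp [meet, pj, emb]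

lemma meet_le_pj (a b : S2) : meet a b ≤ pj a b := by
  cases a <;> cases b <;> simp [meet, pj, LE.le]

lemma ne_zero_of_meet_ne_zero {a b : S2} (h : meet a b ≠ zero) : a ≠ zero ∧ b ≠ zero := by
  revert h; cases a <;> cases b <;> simp [meet]

lemma ne_zero_of_pj_ne_zero {a b : S2} (h : pj a b ≠ zero) : a ≠ zero ∨ b ≠ zero := by
  revert h; cases a <;> cases b <;> simp [pj]

lemma meet_eq_zero_of_not_le_or_le {a b : S2} (h : ¬(a ≤ b ∨ b ≤ a)) : meet a b = zero := by
  revert h; cases a <;> cases b <;> simp [meet, LE.le]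

lemma meet_ne_zero_iff_of_le_or_le {a b : S2} (h : a ≤ b ∨ b ≤ a) :
    meet a b ≠ zero ↔ a ≠ zero ∧ b ≠ zero := by
  revert h; cases a <;> cases b <;> simp [meet, LE.le]

lemma pj_ne_zero_iff_of_le_or_le {a b : S2} (h : a ≤ b ∨ b ≤ a) :
    pj a b ≠ zero ↔ a ≠ zero ∨ b ≠ zero := by
  revert h; cases a <;> cases b <;> simp [pj, LE.le]

end S2

section Potential

variable {n : ℕ}

def vecMeet (u v : Fin n → S2) : Fin n → S2 := fun i => S2.meet (u i) (v i)

def vecPj (u v : Fin n → S2) : Fin n → S2 := fun i => S2.pj (u i) (v i)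

def supp (u : Fin n → S2) : Finset (Fin n) := Finset.univ.filter (u · ≠ S2.zero)

lemma mem_supp {u : Fin n → S2} {i : Fin n} : i ∈ supp u ↔ u i ≠ S2.zero := by simp [supp]

lemma card_supp_le (u : Fin n → S2) : ((supp u).card : ℝ) ≤ n := by
  exact_mod_cast (Finset.card_le_univ (supp u)).trans_eq (Fintype.card_fin n)

lemma supp_vecMeet_subset (u v : Fin n → S2) : supp (vecMeet u v) ⊆ supp u ∩ supp v := by
  intro i
  simpa [mem_supp, vecMeet] using S2.ne_zero_of_meet_ne_zero

lemma supp_vecPj_subset (u v : Fin n → S2) : supp (vecPj u v) ⊆ supp u ∪ supp v := by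
  intro i
  simpa [mem_supp, vecPj, or_iff_not_imp_left] using S2.ne_zero_of_pj_ne_zero

lemma card_supp_vecMeet_add_lt {u v : Fin n → S2} {i : Fin n} (hi : ¬(u i ≤ v i ∨ v i ≤ u i)) :
    (supp (vecMeet u v)).card + (supp (vecPj u v)).card < (supp u).card + (supp v).card := by
  have hiu : u i ≠ S2.zero := fun h => hi (Or.inl (h ▸ S2.zero_le _))
  have hiv : v i ≠ S2.zero := fun h => hi (Or.inr (h ▸ S2.zero_le _))
  have hssub : supp (vecMeet u v) ⊂ supp u ∩ supp v :=
    Finset.ssubset_iff_subset_ne.2 ⟨supp_vecMeet_subset u v, fun h => by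
      simpa [mem_supp, vecMeet, S2.meet_eq_zero_of_not_le_or_le hi, hiu, hiv] using
        (Finset.ext_iff.1 h i).2⟩
  have := Finset.card_lt_card hssub
  have := Finset.card_le_card (supp_vecPj_subset u v)
  have := Finset.card_union_add_card_inter (supp u) (supp v)
  omega

lemma supp_vecMeet_of_le_or_le {u v : Fin n → S2} (h : ∀ i, u i ≤ v i ∨ v i ≤ u i) :
    supp (vecMeet u v) = supp u ∩ supp v := by
  ext i
  simp [mem_supp, vecMeet, S2.meet_ne_zero_iff_of_le_or_le (h i)]

lemma supp_vecPj_of_le_or_le {u v : Fin n → S2} (h : ∀ i, u i ≤ v i ∨ v i ≤ u i) :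
    supp (vecPj u v) = supp u ∪ supp v := by
  ext i
  simp only [Finset.mem_union, mem_supp, vecPj, S2.pj_ne_zero_iff_of_le_or_le (h i)]

lemma supp_sdiff_nonempty_of_le_or_le {u v : Fin n → S2} (h : ∀ i, u i ≤ v i ∨ v i ≤ u i)
    (huv : ¬u ≤ v) : (supp u \ supp v).Nonempty := by
  obtain ⟨i, hi⟩ := not_forall.1 (Pi.le_def.not.1 huv)
  have hui : u i ≠ S2.zero := fun h0 => hi (h0 ▸ S2.zero_le _)
  refine ⟨i, Finset.mem_sdiff.2 ⟨mem_supp.2 hui, fun hvi => hi ?_⟩⟩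
  rw [S2.eq_of_le_of_ne_zero ((h i).resolve_left hi) (mem_supp.1 hvi)]

/-- The coefficient `2 n² + 1` makes a drop of the total support size outweigh any change of the
quadratic term. -/
noncomputable def potential (w : Fin n → S2) : ℝ :=
  (2 * n ^ 2 + 1) * (supp w).card - (supp w).card ^ 2

lemma potential_vecMeet_add_potential_vecPj_lt_of_not_le_or_le {u v : Fin n → S2} {i : Fin n}
    (hi : ¬(u i ≤ v i ∨ v i ≤ u i)) :
    potential (vecMeet u v) + potential (vecPj u v) < potential u + potential v := by
  have hlt : ((supp (vecMeet u v)).card + (supp (vecPj u v)).card + 1 : ℝ)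
      ≤ (supp u).card + (supp v).card := by exact_mod_cast card_supp_vecMeet_add_lt hi
  simp only [potential]
  nlinarith [card_supp_le u, card_supp_le v, sq_nonneg ((supp (vecMeet u v)).card : ℝ),
    sq_nonneg ((supp (vecPj u v)).card : ℝ)]

lemma potential_vecMeet_add_potential_vecPj_lt_of_le_or_le {u v : Fin n → S2}
    (h : ∀ i, u i ≤ v i ∨ v i ≤ u i) (huv : ¬u ≤ v) (hvu : ¬v ≤ u) :
    potential (vecMeet u v) + potential (vecPj u v) < potential u + potential v := by
  have ha := (supp_sdiff_nonempty_of_le_or_le h huv).card_pos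
  have hb := (supp_sdiff_nonempty_of_le_or_le (fun i => (h i).symm) hvu).card_pos
  have hsq : ((supp (vecMeet u v)).card : ℝ) ^ 2 + (supp (vecPj u v)).card ^ 2
      = (supp u).card ^ 2 + (supp v).card ^ 2
        + 2 * (supp u \ supp v).card * (supp v \ supp u).card := by
    rw [supp_vecMeet_of_le_or_le h, supp_vecPj_of_le_or_le h]
    exact_mod_cast Finset.card_inter_sq_add_card_union_sq _ _
  have hlin : ((supp (vecMeet u v)).card : ℝ) + (supp (vecPj u v)).card
      = (supp u).card + (supp v).card := by
    rw [supp_vecMeet_of_le_or_le h, supp_vecPj_of_le_or_le h, add_comm]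
    exact_mod_cast Finset.card_union_add_card_inter _ _
  have hab : (0 : ℝ) < (supp u \ supp v).card * (supp v \ supp u).card := by
    exact_mod_cast Nat.mul_pos ha hb
  simp only [potential]
  nlinarith

lemma potential_vecMeet_add_potential_vecPj_lt {u v : Fin n → S2} (huv : ¬u ≤ v) (hvu : ¬v ≤ u) :
    potential (vecMeet u v) + potential (vecPj u v) < potential u + potential v := by
  by_cases h : ∀ i, u i ≤ v i ∨ v i ≤ u i
  · exact potential_vecMeet_add_potential_vecPj_lt_of_le_or_le h huv hvu
  · obtain ⟨i, hi⟩ := not_forall.1 h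
    exact potential_vecMeet_add_potential_vecPj_lt_of_not_le_or_le hi

end Potential

noncomputable def bary {n : ℕ} : ((Fin n → S2) → ℝ) →ₗ[ℝ] (Fin n → ℝ) :=
  Fintype.linearCombination ℝ fun u i => S2.emb (u i)

lemma bary_apply {n : ℕ} (ν : (Fin n → S2) → ℝ) (i : Fin n) :
    bary ν i = ∑ u, ν u * S2.emb (u i) := by
  simp [bary, Fintype.linearCombination_apply]

lemma bary_single {n : ℕ} (u : Fin n → S2) : bary (Pi.single u 1) = fun i => S2.emb (u i) := by
  rw [bary, Fintype.linearCombination_apply_single, one_smul]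

section Weight

variable {n : ℕ} (x : Fin n → ℝ)

lemma measurable_thresh : Measurable (thresh x) :=
  measurable_pi_lambda _ fun _ => Measurable.ite measurableSet_Iio measurable_const measurable_const

lemma sum_weight_mul (h : (Fin n → S2) → ℝ) :
    ∑ u, weight x u * h u = ∫ t in Set.Ioc 0 1, h (thresh x t) := by
  rw [← integral_map (measurable_thresh x).aemeasurable
    Measurable.of_discrete.aestronglyMeasurable, integral_fintype Integrable.of_finite]
  refine Finset.sum_congr rfl fun u _ => ?_
  rw [smul_eq_mul, measureReal_def,
    Measure.map_apply (measurable_thresh x) (measurableSet_singleton u),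
    Measure.restrict_apply (measurable_thresh x (measurableSet_singleton u)), weight,
    Set.inter_comm]
  rfl

lemma weight_nonneg (u : Fin n → S2) : 0 ≤ weight x u := ENNReal.toReal_nonneg

lemma sum_weight : ∑ u, weight x u = 1 := by
  simpa using sum_weight_mul x 1

lemma emb_thresh_apply (i : Fin n) (t : ℝ) :
    S2.emb (thresh x t i)
      = (Set.Iio |x i|).indicator (fun _ => if 0 < x i then 1 else -1) t := by
  by_cases ht : t < |x i| <;> by_cases hx : 0 < x i <;> simp [thresh, ht, hx, S2.emb]

lemma bary_weight (hx : ∀ i, |x i| ≤ 1) : bary (weight x) = x := by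
  ext i
  have hset : Set.Iio |x i| ∩ Set.Ioc 0 1 = Set.Ioo 0 |x i| := by
    ext t
    simp only [Set.mem_inter_iff, Set.mem_Iio, Set.mem_Ioc, Set.mem_Ioo]
    exact ⟨fun ⟨h₁, h₂, _⟩ => ⟨h₂, h₁⟩, fun ⟨h₁, h₂⟩ => ⟨h₂, h₁, h₂.le.trans (hx i)⟩⟩
  rw [bary_apply, sum_weight_mul x fun u => S2.emb (u i)]
  simp only [emb_thresh_apply]
  rw [integral_indicator_const _ measurableSet_Iio, measureReal_restrict_apply measurableSet_Iio,
    hset, Real.volume_real_Ioo_of_le (abs_nonneg _)]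
  rcases lt_or_ge 0 (x i) with h | h
  · simp [h, abs_of_pos h]
  · simp [not_lt.2 h, abs_of_nonpos h]

variable {x} {t : ℝ} {i : Fin n}

lemma thresh_apply_of_abs_le (h : |x i| ≤ t) : thresh x t i = S2.zero := by
  simp [thresh, not_lt.2 h]

lemma thresh_apply_of_eq_emb_mul {a : S2} {r : ℝ} (ha : a ≠ S2.zero) (ht : 0 ≤ t) (hr : t < r)
    (hx : x i = S2.emb a * r) : thresh x t i = a := by
  have hr0 : 0 < r := ht.trans_lt hr
  cases a <;> simp_all [thresh, S2.emb, abs_of_pos hr0, hr0.le]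

end Weight

section Chain

variable {n : ℕ} (μ : (Fin n → S2) → ℝ)

noncomputable def upperMass (u : Fin n → S2) : ℝ := ∑ v ∈ Finset.univ.filter (u < ·), μ v

variable {μ}

lemma upperMass_nonneg (h0 : ∀ v, 0 ≤ μ v) (u : Fin n → S2) : 0 ≤ upperMass μ u :=
  Finset.sum_nonneg fun v _ => h0 v

lemma add_upperMass_eq_sum (u : Fin n → S2) :
    μ u + upperMass μ u = ∑ v ∈ Finset.univ.filter (u ≤ ·), μ v := by
  rw [upperMass, ← Finset.add_sum_erase _ _ (Finset.mem_filter.2 ⟨Finset.mem_univ u, le_rfl⟩)]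
  congr 2
  ext v
  simp [lt_iff_le_and_ne, and_comm, ne_comm]

lemma add_upperMass_le_sum (h0 : ∀ v, 0 ≤ μ v) (u : Fin n → S2) :
    μ u + upperMass μ u ≤ ∑ v, μ v := by
  rw [add_upperMass_eq_sum]
  exact Finset.sum_le_sum_of_subset_of_nonneg (Finset.filter_subset _ _) fun v _ _ => h0 v

lemma add_upperMass_le_sum_abs_emb (h0 : ∀ v, 0 ≤ μ v) {u : Fin n → S2} {i : Fin n}
    (hu : u i ≠ S2.zero) : μ u + upperMass μ u ≤ ∑ v, μ v * |S2.emb (v i)| := by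
  rw [add_upperMass_eq_sum]
  calc ∑ v ∈ Finset.univ.filter (u ≤ ·), μ v
      = ∑ v ∈ Finset.univ.filter (u ≤ ·), μ v * |S2.emb (v i)| := by
        refine Finset.sum_congr rfl fun v hv => ?_
        rw [S2.eq_of_le_of_ne_zero ((Finset.mem_filter.1 hv).2 i) hu, S2.abs_emb_of_ne_zero hu,
          mul_one]
    _ ≤ ∑ v, μ v * |S2.emb (v i)| :=
        Finset.sum_le_sum_of_subset_of_nonneg (Finset.filter_subset _ _)
          fun v _ _ => mul_nonneg (h0 v) (abs_nonneg _)

variable (hch : IsChain (· ≤ ·) (Function.support μ))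
include hch

lemma sum_abs_emb_le_upperMass (h0 : ∀ v, 0 ≤ μ v) {u : Fin n → S2} (hu : μ u ≠ 0) {i : Fin n}
    (hui : u i = S2.zero) : ∑ v, μ v * |S2.emb (v i)| ≤ upperMass μ u := by
  rw [← Finset.sum_subset (Finset.subset_univ (Finset.univ.filter (u < ·)))]
  · exact Finset.sum_le_sum fun v _ => mul_le_of_le_one_right (h0 v) (S2.abs_emb_le_one _)
  · intro v _ hv
    rcases eq_or_ne (μ v) 0 with hμv | hμv
    · rw [hμv, zero_mul]
    have hvi : v i = S2.zero := by
      rcases hch.total hu hμv with huv | hvu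
      · rw [← (huv.lt_or_eq.resolve_left fun h => hv (by simpa using h)), hui]
      · exact (hvu i).elim id fun h => h.trans hui
    simp [hvi, S2.emb]

lemma bary_apply_of_isChain {u : Fin n → S2} (hu : μ u ≠ 0) {i : Fin n} (hui : u i ≠ S2.zero) :
    bary μ i = S2.emb (u i) * ∑ v, μ v * |S2.emb (v i)| := by
  rw [bary_apply, Finset.mul_sum]
  refine Finset.sum_congr rfl fun v _ => ?_
  rcases eq_or_ne (μ v) 0 with hμv | hμv
  · simp [hμv]
  · rw [mul_left_comm, ← S2.emb_eq_mul_abs_emb ((hch.total hμv hu).imp (· i) (· i)) hui]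

lemma thresh_bary_of_isChain (h0 : ∀ v, 0 ≤ μ v) {u : Fin n → S2} (hu : μ u ≠ 0) {t : ℝ}
    (ht : upperMass μ u ≤ t) (ht' : t < μ u + upperMass μ u) : thresh (bary μ) t = u := by
  funext i
  by_cases hui : u i = S2.zero
  · rw [hui]
    refine thresh_apply_of_abs_le ?_
    calc |bary μ i| ≤ ∑ v, |μ v * S2.emb (v i)| := by
          rw [bary_apply]; exact Finset.abs_sum_le_sum_abs _ _
      _ = ∑ v, μ v * |S2.emb (v i)| := by simp only [abs_mul, abs_of_nonneg (h0 _)]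
      _ ≤ t := (sum_abs_emb_le_upperMass hch h0 hu hui).trans ht
  · exact thresh_apply_of_eq_emb_mul hui ((upperMass_nonneg h0 u).trans ht)
      (ht'.trans_le (add_upperMass_le_sum_abs_emb h0 hui)) (bary_apply_of_isChain hch hu hui)

lemma le_weight_bary_of_isChain (h0 : ∀ v, 0 ≤ μ v) (h1 : ∑ v, μ v = 1) (u : Fin n → S2) :
    μ u ≤ weight (bary μ) u := by
  rcases eq_or_ne (μ u) 0 with hu | hu
  · exact hu ▸ weight_nonneg _ u
  have hsub : Set.Ioo (upperMass μ u) (μ u + upperMass μ u)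
      ⊆ {t | t ∈ Set.Ioc (0 : ℝ) 1 ∧ thresh (bary μ) t = u} := fun t ht =>
    ⟨⟨(upperMass_nonneg h0 u).trans_lt ht.1, ht.2.le.trans (h1 ▸ add_upperMass_le_sum h0 u)⟩,
      thresh_bary_of_isChain hch h0 hu ht.1.le ht.2⟩
  calc μ u = volume.real (Set.Ioo (upperMass μ u) (μ u + upperMass μ u)) := by
        rw [Real.volume_real_Ioo_of_le (by linarith [h0 u])]; ring
    _ ≤ weight (bary μ) u :=
        measureReal_mono hsub (((measure_mono fun t ht => ht.1).trans_lt measure_Ioc_lt_top).ne)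

/-- The weights dominate `μ` termwise and both sum to `1`. -/
lemma weight_bary_of_isChain (h0 : ∀ v, 0 ≤ μ v) (h1 : ∑ v, μ v = 1) :
    weight (bary μ) = μ := by
  funext u
  refine ((Finset.sum_eq_sum_iff_of_le fun v _ => le_weight_bary_of_isChain hch h0 h1 v).1
    ?_ u (Finset.mem_univ u)).symm
  rw [h1, sum_weight]

end Chain

section Uncrossing

variable {n : ℕ} (D : Set (Fin n → S2)) (g : (Fin n → S2) → ℝ) (ρ : (Fin n → S2) → ℝ)

def cheaperReps : Set ((Fin n → S2) → ℝ) :=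
  {ν | (∀ u, 0 ≤ ν u) ∧ Function.support ν ⊆ D ∧ ∑ u, ν u = ∑ u, ρ u ∧ bary ν = bary ρ ∧
    ∑ u, ν u * g u ≤ ∑ u, ρ u * g u}

lemma isCompact_cheaperReps : IsCompact (cheaperReps D g ρ) := by
  have hclosed : IsClosed (cheaperReps D g ρ) := by
    simp only [cheaperReps, Set.ofPred_and, Set.ofPred_forall, Function.support_subset_iff']
    refine .inter (isClosed_iInter fun u => isClosed_le continuous_const (continuous_apply u)) <|
      .inter (isClosed_iInter fun u => isClosed_iInter fun _ =>
        isClosed_eq (continuous_apply u) continuous_const) <|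
      .inter (isClosed_eq (continuous_finsetSum _ fun u _ => continuous_apply u)
        continuous_const) <|
      .inter (isClosed_eq (LinearMap.continuous_of_finiteDimensional _) continuous_const)
        (isClosed_le (by fun_prop) continuous_const)
  refine isCompact_Icc.of_isClosed_subset hclosed
    (fun ν hν => ⟨hν.1, fun u => ?_⟩ : _ ⊆ Set.Icc 0 fun _ => ∑ u, ρ u)
  exact hν.2.2.1 ▸ Finset.single_le_sum (fun v _ => hν.1 v) (Finset.mem_univ u)

variable {D g ρ}

lemma exists_mem_cheaperReps_potential_lt
    (hD : ∀ u ∈ D, ∀ v ∈ D, vecMeet u v ∈ D ∧ vecPj u v ∈ D)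
    (hg : ∀ u ∈ D, ∀ v ∈ D, g (vecMeet u v) + g (vecPj u v) ≤ g u + g v)
    {ν : (Fin n → S2) → ℝ} (hν : ν ∈ cheaperReps D g ρ) {u v : Fin n → S2} (hu : ν u ≠ 0)
    (hv : ν v ≠ 0) (huv : ¬u ≤ v) (hvu : ¬v ≤ u) :
    ∃ ν' ∈ cheaperReps D g ρ, ∑ w, ν' w * potential w < ∑ w, ν w * potential w := by
  obtain ⟨hν0, hνD, hν1, hνbary, hνg⟩ := hν
  obtain ⟨ν', hν'0, hν'supp, ε, hε, hν'⟩ :=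
    exists_mass_transfer hν0 hu hv (fun h => huv (h ▸ le_rfl)) (vecMeet u v) (vecPj u v)
  refine ⟨ν', ⟨hν'0, hν'supp.trans ?_, ?_, ?_, ?_⟩, ?_⟩
  · have := hD u (hνD hu) v (hνD hv)
    exact Set.insert_subset this.1 (Set.insert_subset this.2 hνD)
  · simpa [hν1] using hν' 1
  · ext i
    rw [bary_apply, hν' fun w => S2.emb (w i), ← bary_apply, hνbary]
    simp only [vecMeet, vecPj, S2.emb_meet_add_emb_pj]
    ring
  · rw [hν' g]
    nlinarith [hg u (hνD hu) v (hνD hv)]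
  · rw [hν']
    nlinarith [potential_vecMeet_add_potential_vecPj_lt huv hvu]

theorem exists_isChain_mem_cheaperReps
    (hD : ∀ u ∈ D, ∀ v ∈ D, vecMeet u v ∈ D ∧ vecPj u v ∈ D)
    (hg : ∀ u ∈ D, ∀ v ∈ D, g (vecMeet u v) + g (vecPj u v) ≤ g u + g v)
    (h0 : ∀ u, 0 ≤ ρ u) (hρD : Function.support ρ ⊆ D) :
    ∃ ν ∈ cheaperReps D g ρ, IsChain (· ≤ ·) (Function.support ν) := by
  obtain ⟨ν, hν, hmin⟩ := (isCompact_cheaperReps D g ρ).exists_isMinOn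
    ⟨ρ, h0, hρD, rfl, rfl, le_rfl⟩
    (by fun_prop : Continuous fun ν : (Fin n → S2) → ℝ => ∑ w, ν w * potential w).continuousOn
  refine ⟨ν, hν, fun u hu v hv _ => by_contra fun hcomp => ?_⟩
  obtain ⟨ν', hν', hlt⟩ := exists_mem_cheaperReps_potential_lt hD hg hν hu hv
    (fun h => hcomp (.inl h)) (fun h => hcomp (.inr h))
  exact (isMinOn_iff.1 hmin ν' hν').not_gt hlt

end Uncrossing

section Lovasz

variable {n : ℕ} (f : (Fin n → S2) → EReal)

lemma lovasz_bary_of_isChain {μ : (Fin n → S2) → ℝ} (hch : IsChain (· ≤ ·) (Function.support μ))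
    (h0 : ∀ u, 0 ≤ μ u) (h1 : ∑ u, μ u = 1) :
    lovasz f (bary μ) = ∑ u, (μ u : EReal) * f u := by
  rw [lovasz, weight_bary_of_isChain hch h0 h1]

lemma lovasz_emb (u : Fin n → S2) : lovasz f (fun i => S2.emb (u i)) = f u := by
  rw [← bary_single, lovasz_bary_of_isChain f
    ((Set.subsingleton_singleton.anti Pi.support_single_subset).isChain)
    (single_one_nonneg u) (by simp), sum_coe_single_mul]

lemma lovasz_midpoint_emb (x y : Fin n → S2) :
    lovasz f (fun i => 2⁻¹ * S2.emb (x i) + 2⁻¹ * S2.emb (y i))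
      = ((2⁻¹ : ℝ) : EReal) * f (vecMeet x y) + ((2⁻¹ : ℝ) : EReal) * f (vecPj x y) := by
  set μ : (Fin n → S2) → ℝ :=
    (2⁻¹ : ℝ) • Pi.single (vecMeet x y) 1 + (2⁻¹ : ℝ) • Pi.single (vecPj x y) 1
  have hbary : bary μ = fun i => 2⁻¹ * S2.emb (x i) + 2⁻¹ * S2.emb (y i) := by
    ext i
    simp only [μ, map_add, map_smul, bary_single, Pi.add_apply, Pi.smul_apply, smul_eq_mul,
      vecMeet, vecPj]
    linarith [S2.emb_meet_add_emb_pj (x i) (y i)]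
  have hch : IsChain (· ≤ ·) (Function.support μ) :=
    (IsChain.pair fun i => S2.meet_le_pj (x i) (y i)).mono <|
      (Function.support_add _ _).trans <| Set.union_subset_union
        ((Function.support_const_smul_subset _ _).trans Pi.support_single_subset)
        ((Function.support_const_smul_subset _ _).trans Pi.support_single_subset)
  have h0 : ∀ u, 0 ≤ μ u := fun u => by
    simp only [μ, Pi.add_apply, Pi.smul_apply, smul_eq_mul]
    nlinarith [single_one_nonneg (vecMeet x y) u, single_one_nonneg (vecPj x y) u]
  have h1 : ∑ u, μ u = 1 := by
    simp [μ, Finset.sum_add_distrib, ← Finset.mul_sum]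
    norm_num
  rw [← hbary, lovasz_bary_of_isChain f hch h0 h1, sum_coe_smul_add_smul_mul (by norm_num)
    (by norm_num) (single_one_nonneg _) (single_one_nonneg _), sum_coe_single_mul,
    sum_coe_single_mul]

variable {f}

lemma lovasz_bary_le_of_ne_top (hf : ∀ u, f u ≠ ⊥)
    (hsub : ∀ x y, f (vecMeet x y) + f (vecPj x y) ≤ f x + f y)
    {ρ : (Fin n → S2) → ℝ} (h0 : ∀ u, 0 ≤ ρ u) (h1 : ∑ u, ρ u = 1)
    (htop : ∀ u, ρ u ≠ 0 → f u ≠ ⊤) :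
    lovasz f (bary ρ) ≤ ∑ u, (ρ u : EReal) * f u := by
  set D : Set (Fin n → S2) := {u | f u ≠ ⊤}
  have hcoe : ∀ u ∈ D, ((f u).toReal : EReal) = f u := fun u hu => EReal.coe_toReal hu (hf u)
  have hD : ∀ u ∈ D, ∀ v ∈ D, vecMeet u v ∈ D ∧ vecPj u v ∈ D := fun u hu v hv =>
    (EReal.add_ne_top_iff_ne_top₂ (hf _) (hf _)).1
      (ne_top_of_le_ne_top (EReal.add_ne_top hu hv) (hsub u v))
  have hg : ∀ u ∈ D, ∀ v ∈ D, (f (vecMeet u v)).toReal + (f (vecPj u v)).toReal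
      ≤ (f u).toReal + (f v).toReal := fun u hu v hv => by
    have := hsub u v
    rwa [← hcoe u hu, ← hcoe v hv, ← hcoe _ (hD u hu v hv).1, ← hcoe _ (hD u hu v hv).2,
      ← EReal.coe_add, ← EReal.coe_add, EReal.coe_le_coe_iff] at this
  obtain ⟨ν, ⟨hν0, hνD, hν1, hνbary, hνg⟩, hch⟩ :=
    exists_isChain_mem_cheaperReps (g := fun u => (f u).toReal) hD hg h0 htop
  rw [← hνbary, lovasz_bary_of_isChain f hch hν0 (hν1.trans h1),
    sum_coe_mul_eq_coe_sum_mul_toReal hf fun u hu => hνD hu,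
    sum_coe_mul_eq_coe_sum_mul_toReal hf htop]
  exact EReal.coe_le_coe_iff.2 hνg

lemma lovasz_bary_le (hf : ∀ u, f u ≠ ⊥)
    (hsub : ∀ x y, f (vecMeet x y) + f (vecPj x y) ≤ f x + f y)
    {ρ : (Fin n → S2) → ℝ} (h0 : ∀ u, 0 ≤ ρ u) (h1 : ∑ u, ρ u = 1) :
    lovasz f (bary ρ) ≤ ∑ u, (ρ u : EReal) * f u := by
  by_cases htop : ∃ u, ρ u ≠ 0 ∧ f u = ⊤
  · obtain ⟨u, hu, hfu⟩ := htop
    rw [sum_coe_mul_eq_top h0 hf hu hfu]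
    exact le_top
  · push Not at htop
    exact lovasz_bary_le_of_ne_top hf hsub h0 h1 htop

end Lovasz

/-- A function `f : {-1,0,1}ⁿ → ℝ ∪ {∞}` is bisubmodular iff its Lovász extension is convex
on the cube `[-1,1]ⁿ`. -/
theorem stmt8 {n : ℕ} (f : (Fin n → S2) → EReal) (hf : ∀ u, f u ≠ ⊥) :
    (∀ x y : Fin n → S2,
      f (fun i => S2.meet (x i) (y i)) + f (fun i => S2.pj (x i) (y i)) ≤ f x + f y) ↔
    (∀ x y : Fin n → ℝ, (∀ i, |x i| ≤ 1) → (∀ i, |y i| ≤ 1) →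
      ∀ t : ℝ, 0 ≤ t → t ≤ 1 →
        lovasz f (fun i => t * x i + (1 - t) * y i) ≤
          ((t : ℝ) : EReal) * lovasz f x + (((1 - t : ℝ)) : EReal) * lovasz f y) := by
  constructor
  · intro hsub x y hx hy t ht0 ht1
    have hbary : bary (t • weight x + (1 - t) • weight y) = fun i => t * x i + (1 - t) * y i := by
      ext i
      simp [bary_weight x hx, bary_weight y hy]
    rw [← hbary]
    refine (lovasz_bary_le hf hsub (fun u => ?_) ?_).trans_eq
      (sum_coe_smul_add_smul_mul ht0 (sub_nonneg.2 ht1) (weight_nonneg x) (weight_nonneg y) f)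
    · exact add_nonneg (mul_nonneg ht0 (weight_nonneg x u))
        (mul_nonneg (sub_nonneg.2 ht1) (weight_nonneg y u))
    · simp [Finset.sum_add_distrib, ← Finset.mul_sum, sum_weight]
  · intro hconv x y
    have := hconv _ _ (fun i => S2.abs_emb_le_one (x i)) (fun i => S2.abs_emb_le_one (y i)) 2⁻¹
      (by norm_num) (by norm_num)
    rw [show (1 - 2⁻¹ : ℝ) = 2⁻¹ by norm_num, lovasz_midpoint_emb, lovasz_emb, lovasz_emb] at this
    exact EReal.add_le_add_of_half_mul this
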